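/- Let t ≥ 1, and let F = (f₁, …, f_m) be a vectorial (2t, m)-bent function given by components f_i : (Fin (2t) → ZMod 2) → ZMod 2 with f_i(0) = 0 for each i; that is, for every nonzero v ∈ Z_2^m the linear combination Σ_i v_i f_i is a bent function (Nl(Σ_i v_i f_i) = 2^{2t−1} − 2^{t−1}). Let Ω_i be the support of f_i. Then for every nonempty index subset I ⊆ {1, …, m}, the Cayley graph Cay(Z_2^{2t}, △_{i∈I} Ω_i), whose distinct vertices u, v are adjacent iff u + v lies in the symmetric difference △_{i∈I} Ω_i, is a strongly regular graph with λ = μ: it satisfies IsSRGWith 2^{2t} k λ λ for some k and λ. -/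

import Mathlib

/-- The nonlinearity of a Boolean function `f`: the minimum Hamming distance from `f`
to an affine function `x ↦ a·x + c`. -/
noncomputable def nonlinearity {n : ℕ} (f : (Fin n → ZMod 2) → ZMod 2) : ℕ :=
  sInf {d : ℕ | ∃ (a : Fin n → ZMod 2) (c : ZMod 2),
    d = (Finset.univ.filter (fun x : Fin n → ZMod 2 =>
      f x ≠ (∑ i, a i * x i) + c)).card}

/-- The Cayley graph of `Z_2^{2t}` whose connection set is the symmetric difference
`△_{i∈I} Ω_i` of the supports of the `f i`, `i ∈ I`: distinct `u`, `v` are adjacent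
iff `u + v` belongs to an odd number of the supports `Ω_i`, `i ∈ I`. -/
def symmDiffCayleyGraph {n m : ℕ} (f : Fin m → (Fin n → ZMod 2) → ZMod 2)
    (I : Finset (Fin m)) : SimpleGraph (Fin n → ZMod 2) :=
  SimpleGraph.fromRel (fun u v => Odd (I.filter (fun i => f i (u + v) = 1)).card)


instance {n m : ℕ} (f : Fin m → (Fin n → ZMod 2) → ZMod 2) (I : Finset (Fin m)) :
    DecidableRel (symmDiffCayleyGraph f I).Adj := fun u v =>
  inferInstanceAs (Decidable (u ≠ v ∧
    (Odd (I.filter (fun i => f i (u + v) = 1)).card ∨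
     Odd (I.filter (fun i => f i (v + u) = 1)).card)))

/-!
Put `g = ∑_{i ∈ I} f i`: its support is the connection set, and `g` is bent by the hypothesis
applied to the indicator vector of `I`. Since `Nl(g) = 2^(2t-1) - max_a |W_g(a)| / 2`, bentness
bounds every Walsh coefficient by `|W_g(a)| ≤ 2^t`, and Parseval `∑_a W_g(a)^2 = 2^(4t)` forces
`W_g(a)^2 = 2^(2t)` for all `a`. By Wiener–Khinchin the autocorrelation of `(-1)^g` then vanishes
off `0`: for `s ≠ 0`, `g x ≠ g (x + s)` for exactly half of all `x`. Hence
`#{x | g x = 1 = g (x + s)} = #supp g - 2^(2t-2)` for every `s ≠ 0`, and this is the number of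
common neighbours of any two distinct vertices `u`, `v` (take `s = u + v`).
-/

namespace BooleanFunction

open Finset

def chi (x : ZMod 2) : ℤ := if x = 0 then 1 else -1

lemma chi_add : ∀ x y : ZMod 2, chi (x + y) = chi x * chi y := by decide

lemma chi_add_of_ne_zero : ∀ x y : ZMod 2, y ≠ 0 → chi (x + y) = -chi x := by decide

lemma chi_add_eq_one_sub : ∀ x y : ZMod 2, chi (x + y) = 1 - 2 * if x ≠ y then 1 else 0 := by
  decide

variable {n : ℕ}

lemma vec_add_self (v : Fin n → ZMod 2) : v + v = 0 :=
  funext fun i => CharTwo.add_self_eq_zero (v i)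

lemma vec_neg (v : Fin n → ZMod 2) : -v = v :=
  neg_eq_of_add_eq_zero_left (vec_add_self v)

lemma vec_add_add_cancel_right (x s : Fin n → ZMod 2) : x + s + s = x := by
  rw [add_assoc, vec_add_self, add_zero]

lemma vec_add_add_cancel_left (u x : Fin n → ZMod 2) : u + (u + x) = x := by
  rw [← add_assoc, vec_add_self, zero_add]

lemma sum_chi_dotProduct (s : Fin n → ZMod 2) :
    ∑ a : Fin n → ZMod 2, chi (a ⬝ᵥ s) = if s = 0 then 2 ^ n else 0 := by
  split_ifs with hs
  · simp [hs, chi]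
  obtain ⟨j, hj⟩ := Function.ne_iff.mp hs
  have hshift := Fintype.sum_equiv (Equiv.addRight (Pi.single j 1))
    (fun a => chi ((a + Pi.single j 1) ⬝ᵥ s)) (fun a => chi (a ⬝ᵥ s)) fun _ => rfl
  simp only [add_dotProduct, single_dotProduct, one_mul, chi_add_of_ne_zero _ _ hj,
    sum_neg_distrib] at hshift
  linarith

lemma sum_chi_add_eq_card (h k : (Fin n → ZMod 2) → ZMod 2) :
    ∑ x, chi (h x + k x) = 2 ^ n - 2 * #{x | h x ≠ k x} := by
  simp only [chi_add_eq_one_sub, sum_sub_distrib, ← mul_sum, sum_boole]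
  simp

def walsh (g : (Fin n → ZMod 2) → ZMod 2) (a : Fin n → ZMod 2) : ℤ :=
  ∑ x, chi (g x + a ⬝ᵥ x)

variable (g : (Fin n → ZMod 2) → ZMod 2)

/-- Wiener–Khinchin: the squared Walsh spectrum is the Fourier transform of the autocorrelation
of `(-1)^g`. -/
lemma sum_walsh_sq_mul_chi (s : Fin n → ZMod 2) :
    ∑ a, walsh g a ^ 2 * chi (a ⬝ᵥ s) = 2 ^ n * ∑ x, chi (g x + g (x + s)) := by
  have hexpand (a : Fin n → ZMod 2) : walsh g a ^ 2 * chi (a ⬝ᵥ s)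
      = ∑ x, ∑ y, chi (g x + g y) * chi (a ⬝ᵥ (x + y + s)) := by
    rw [sq, walsh, sum_mul_sum, sum_mul]
    refine sum_congr rfl fun x _ => ?_
    rw [sum_mul]
    refine sum_congr rfl fun y _ => ?_
    simp only [dotProduct_add, chi_add]
    ring
  have hdelta (x y : Fin n → ZMod 2) : x + y + s = 0 ↔ y = x + s := by
    rw [← sub_eq_zero (a := y), sub_eq_add_neg, vec_neg, add_comm y, add_right_comm]
  rw [sum_congr rfl fun a _ => hexpand a, sum_comm, mul_sum]
  refine sum_congr rfl fun x _ => ?_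
  rw [sum_comm]
  simp only [← mul_sum, sum_chi_dotProduct, hdelta, mul_ite, mul_zero, sum_ite_eq', mem_univ,
    if_true]
  ring

lemma sum_walsh_sq : ∑ a, walsh g a ^ 2 = 2 ^ n * 2 ^ n := by
  simpa [CharTwo.add_self_eq_zero, chi] using sum_walsh_sq_mul_chi g 0

lemma walsh_eq_card (a : Fin n → ZMod 2) :
    walsh g a = 2 ^ n - 2 * #{x | g x ≠ a ⬝ᵥ x} :=
  sum_chi_add_eq_card g (a ⬝ᵥ ·)

lemma nonlinearity_le_card (a : Fin n → ZMod 2) (c : ZMod 2) :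
    nonlinearity g ≤ #{x | g x ≠ a ⬝ᵥ x + c} :=
  Nat.sInf_le ⟨a, c, rfl⟩

lemma abs_walsh_le (a : Fin n → ZMod 2) :
    |walsh g a| ≤ 2 ^ n - 2 * nonlinearity g := by
  have hcompl : #{x | g x ≠ a ⬝ᵥ x + 1} + #{x | g x ≠ a ⬝ᵥ x} = 2 ^ n := by
    have hflip : ∀ y z : ZMod 2, y ≠ z + 1 ↔ ¬y ≠ z := by decide
    simp only [hflip]
    rw [add_comm, card_filter_add_card_filter_not]
    simp
  have h0 := nonlinearity_le_card g a 0
  have h1 := nonlinearity_le_card g a 1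
  simp only [add_zero] at h0
  rw [walsh_eq_card, abs_le]
  constructor <;> linarith

lemma sq_walsh_eq_of_forall_sq_walsh_le (h : ∀ a, walsh g a ^ 2 ≤ 2 ^ n)
    (a : Fin n → ZMod 2) : walsh g a ^ 2 = 2 ^ n := by
  have hsum : ∑ a, walsh g a ^ 2 = ∑ _a : Fin n → ZMod 2, (2 : ℤ) ^ n := by
    simp [sum_walsh_sq]
  exact (sum_eq_sum_iff_of_le fun a _ => h a).mp hsum a (mem_univ a)

lemma sq_walsh_eq_of_nonlinearity_eq {t : ℕ} (ht : 1 ≤ t)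
    (g : (Fin (2 * t) → ZMod 2) → ZMod 2) (hg : nonlinearity g = 2 ^ (2 * t - 1) - 2 ^ (t - 1))
    (a : Fin (2 * t) → ZMod 2) :
    walsh g a ^ 2 = 2 ^ (2 * t) := by
  refine sq_walsh_eq_of_forall_sq_walsh_le g (fun b => ?_) a
  have hradius : (2 : ℤ) ^ (2 * t) - 2 * nonlinearity g = 2 ^ t := by
    obtain ⟨r, rfl⟩ : ∃ r, t = r + 1 := ⟨t - 1, by omega⟩
    rw [hg, show 2 * (r + 1) - 1 = 2 * r + 1 by omega, Nat.add_sub_cancel,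
      Nat.cast_sub (Nat.pow_le_pow_right two_pos (by omega))]
    push_cast
    ring
  calc walsh g b ^ 2 = |walsh g b| ^ 2 := (sq_abs _).symm
    _ ≤ (2 ^ t) ^ 2 := pow_le_pow_left₀ (abs_nonneg _) (hradius ▸ abs_walsh_le g b) 2
    _ = 2 ^ (2 * t) := by ring

lemma two_mul_card_ne_translate_eq (hW : ∀ a, walsh g a ^ 2 = 2 ^ n)
    {s : Fin n → ZMod 2} (hs : s ≠ 0) : 2 * #{x | g x ≠ g (x + s)} = 2 ^ n := by
  have h := sum_walsh_sq_mul_chi g s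
  rw [sum_congr rfl fun a _ => by rw [hW a], ← mul_sum, sum_chi_dotProduct, if_neg hs,
    mul_zero, sum_chi_add_eq_card, eq_comm, mul_eq_zero, sub_eq_zero] at h
  exact_mod_cast (h.resolve_left (by positivity)).symm

lemma card_ne_translate_eq_two_mul (s : Fin n → ZMod 2) :
    #{x | g x ≠ g (x + s)} = 2 * #{x | g x = 1 ∧ g (x + s) ≠ 1} := by
  have hsplit : ∀ y z : ZMod 2, y ≠ z ↔ (y = 1 ∧ z ≠ 1) ∨ (z = 1 ∧ y ≠ 1) := by
    decide
  have htranslate : #{x | g (x + s) = 1 ∧ g x ≠ 1} = #{x | g x = 1 ∧ g (x + s) ≠ 1} :=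
    card_nbij' (· + s) (· + s) (fun x hx => by simpa [vec_add_add_cancel_right] using hx)
      (fun x hx => by simpa [vec_add_add_cancel_right] using hx)
      (fun x _ => vec_add_add_cancel_right x s) (fun x _ => vec_add_add_cancel_right x s)
  rw [filter_congr fun x _ => hsplit (g x) (g (x + s)), filter_or, card_union_of_disjoint,
    htranslate, two_mul]
  exact disjoint_filter.mpr fun x _ h1 h2 => h2.2 h1.1

lemma card_support_eq_card_inter_translate_add (s : Fin n → ZMod 2) :
    #{x | g x = 1} = #{x | g x = 1 ∧ g (x + s) = 1} + #{x | g x = 1 ∧ g (x + s) ≠ 1} := by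
  rw [← filter_filter, ← filter_filter, card_filter_add_card_filter_not]

lemma card_support_inter_translate_eq (hn : 2 ≤ n)
    (hW : ∀ a, walsh g a ^ 2 = 2 ^ n) {s : Fin n → ZMod 2} (hs : s ≠ 0) :
    #{x | g x = 1 ∧ g (x + s) = 1} = #{x | g x = 1} - 2 ^ (n - 2) := by
  have hbalanced := two_mul_card_ne_translate_eq g hW hs
  have hpow : 2 ^ n = 4 * 2 ^ (n - 2) := by
    rw [show (4 : ℕ) = 2 ^ 2 by rfl, ← pow_add, Nat.add_sub_cancel' hn]
  rw [card_ne_translate_eq_two_mul] at hbalanced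
  have := card_support_eq_card_inter_translate_add g s
  omega

theorem cayley_isSRGWith_of_card_support_inter_translate {G : SimpleGraph (Fin n → ZMod 2)}
    [DecidableRel G.Adj] (hG : ∀ u v, G.Adj u v ↔ g (u + v) = 1) {lam : ℕ}
    (hlam : ∀ s ≠ 0, #{x | g x = 1 ∧ g (x + s) = 1} = lam) :
    G.IsSRGWith (2 ^ n) #{x | g x = 1} lam lam := by
  have hcommon (u v : Fin n → ZMod 2) (huv : u ≠ v) :
      Fintype.card (G.commonNeighbors u v) = lam := by
    have hs : u + v ≠ 0 := fun h => huv (by rw [← vec_add_add_cancel_left u v, h, add_zero])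
    rw [← hlam (u + v) hs, ← Set.toFinset_card]
    refine card_nbij' (u + ·) (u + ·) (fun w hw => ?_) (fun x hx => ?_)
      (fun w _ => vec_add_add_cancel_left u w) (fun x _ => vec_add_add_cancel_left u x)
    · simp only [Set.coe_toFinset, SimpleGraph.mem_commonNeighbors, hG] at hw
      simpa [add_add_add_comm u w u v, vec_add_self, add_comm w v] using hw
    · simp only [coe_filter, mem_univ, true_and, Set.mem_ofPred_eq] at hx
      simp only [Set.coe_toFinset, SimpleGraph.mem_commonNeighbors, hG, vec_add_add_cancel_left]
      rwa [add_left_comm, ← add_assoc, add_comm (u + v)]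
  refine ⟨by simp, fun u => ?_, fun u v h => hcommon u v (G.ne_of_adj h),
    fun u v huv _ => hcommon u v huv⟩
  rw [← G.card_neighborFinset_eq_degree]
  exact card_nbij' (u + ·) (u + ·) (fun w hw => by simpa [hG] using hw)
    (fun x hx => by simpa [hG, vec_add_add_cancel_left] using hx)
    (fun w _ => vec_add_add_cancel_left u w) (fun x _ => vec_add_add_cancel_left u x)

lemma sum_eq_one_iff_odd_card {ι : Type*} (s : Finset ι) (h : ι → ZMod 2) :
    ∑ i ∈ s, h i = 1 ↔ Odd (s.filter fun i => h i = 1).card := by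
  have hbool : ∀ y : ZMod 2, y = if y = 1 then 1 else 0 := by decide
  rw [sum_congr rfl fun i _ => hbool (h i), sum_boole, ZMod.natCast_eq_one_iff_odd]

lemma symmDiffCayleyGraph_adj_iff {m : ℕ} (f : Fin m → (Fin n → ZMod 2) → ZMod 2)
    (I : Finset (Fin m)) (h0 : ∀ i ∈ I, f i 0 = 0) (u v : Fin n → ZMod 2) :
    (symmDiffCayleyGraph f I).Adj u v ↔ ∑ i ∈ I, f i (u + v) = 1 := by
  rw [symmDiffCayleyGraph, SimpleGraph.fromRel_adj, add_comm v u, or_self,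
    ← sum_eq_one_iff_odd_card]
  refine ⟨And.right, fun h => ⟨?_, h⟩⟩
  rintro rfl
  simp [vec_add_self, sum_eq_zero h0] at h

end BooleanFunction

theorem vectorial_bent_symmDiff_cayleyGraph_isSRG (t m : ℕ) (ht : 1 ≤ t)
    (f : Fin m → (Fin (2 * t) → ZMod 2) → ZMod 2)
    (h0 : ∀ i, f i 0 = 0)
    (hbent : ∀ v : Fin m → ZMod 2, v ≠ 0 →
      nonlinearity (fun x => ∑ i, v i * f i x) = 2 ^ (2 * t - 1) - 2 ^ (t - 1))
    (I : Finset (Fin m)) (hI : I.Nonempty) :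
    ∃ k lam : ℕ, (symmDiffCayleyGraph f I).IsSRGWith (2 ^ (2 * t)) k lam lam := by
  set g : (Fin (2 * t) → ZMod 2) → ZMod 2 := fun x => ∑ i ∈ I, f i x
  have hg : nonlinearity g = 2 ^ (2 * t - 1) - 2 ^ (t - 1) := by
    obtain ⟨j, hj⟩ := hI
    have hv : (fun i => if i ∈ I then (1 : ZMod 2) else 0) ≠ 0 := fun h => by
      simpa [hj] using congrFun h j
    simpa [g, ite_mul, Finset.sum_ite_mem] using hbent _ hv
  have hW := BooleanFunction.sq_walsh_eq_of_nonlinearity_eq ht g hg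
  exact ⟨_, _, BooleanFunction.cayley_isSRGWith_of_card_support_inter_translate g
    (BooleanFunction.symmDiffCayleyGraph_adj_iff f I fun i _ => h0 i)
    fun s hs => BooleanFunction.card_support_inter_translate_eq g (by omega) hW hs⟩
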